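/- There exists a clopen subset O of (𝔈, τ) with 0 ∈ O such that for every clopen subset V of (𝔈, τ) with 0 ∈ V one has V + V ⊄ O; that is, no clopen neighborhood V of the identity satisfies V + V ⊆ O. -/

import Mathlib

noncomputable section

open scoped ENNReal

/-- The ambient Hilbert space `ℓ²` of real square-summable sequences. -/
abbrev ellTwo : Type := lp (fun _ : ℕ => ℝ) 2

/-- Erdős space `𝔈`: the additive subgroup of `ℓ²` consisting of the sequences
all of whose coordinates are rational. -/
def Erdos : AddSubgroup ellTwo where
  carrier := {x | ∀ k, ∃ q : ℚ, (x : ℕ → ℝ) k = (q : ℝ)}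
  add_mem' := by
    intro a b ha hb k
    obtain ⟨p, hp⟩ := ha k
    obtain ⟨q, hq⟩ := hb k
    exact ⟨p + q, by rw [lp.coeFn_add]; simp [hp, hq]⟩
  zero_mem' := fun k => ⟨0, by simp⟩
  neg_mem' := by
    intro a ha k
    obtain ⟨p, hp⟩ := ha k
    exact ⟨-p, by rw [lp.coeFn_neg]; simp [hp]⟩

/-- Erdős space as a type (with the subspace topology and norm inherited from `ℓ²`). -/
abbrev ErdosSpace : Type := ↥Erdos

/-- The coordinates of a point of Erdős space (indexed from `0`, so that the
coordinate `x_k` of the paper is `coords x (k-1)`). -/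
def coords (x : ErdosSpace) : ℕ → ℝ := ((x : ellTwo) : ℕ → ℝ)

/-- `mExists x α` says that `m_{x,α}` exists, i.e. some finite initial sum of squares
of coordinates exceeds `α` (here `m` counts how many initial coordinates are taken). -/
def mExists (x : ErdosSpace) (α : ℝ) : Prop :=
  ∃ m : ℕ, α < Real.sqrt (∑ k ∈ Finset.range m, (coords x k) ^ 2)

/-- `mIndex x α` is the least `m` such that `√(∑_{k<m} x_k²) > α` (and `0` if none exists);
this corresponds to `m_{x,α}` of the paper. -/
def mIndex (x : ErdosSpace) (α : ℝ) : ℕ :=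
  sInf {m : ℕ | α < Real.sqrt (∑ k ∈ Finset.range m, (coords x k) ^ 2)}

/-- The set `A_{α,β}`: those `x` for which either `m_{x,α}` exists and every coordinate
beyond the first `m_{x,α}` ones has absolute value `< β`, or `m_{x,α}` does not exist. -/
def A (α β : ℝ) : Set ErdosSpace :=
  {x | (mExists x α ∧ ∀ l, mIndex x α ≤ l → |coords x l| < β) ∨ ¬mExists x α}

/-!
Take `O = ⋂ₙ A(αₙ, βₙ)` with `αₙ → ∞`, `βₙ → 0`, and `αₙ²`, `βₙ` irrational. Points of Erdős
space have rational coordinates, so their partial sums of squares never equal `αₙ²` and their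
coordinates never have absolute value `βₙ`; hence each `A(α, β)` is an intersection of clopen
sets, only finitely many of which are nontrivial near any point (coordinates tend to `0`), and
`A(αₙ, βₙ)` contains the ball of radius `αₙ`, so `O` is clopen as well.

By Erdős's theorem a clopen neighbourhood `V` of `0` is unbounded: otherwise, choosing at each
coordinate in turn a rational increment that keeps us in `V` and is within `1/(n+1)` of the
largest possible one, we reach a limit point in `V`, around which `V` is open, so a larger
increment was possible at some late coordinate. Now pick `δ` with `δ eₗ ∈ V` for all `l`, `n`
with `βₙ < δ/2`, and `u ∈ V` with `‖u‖ > αₙ`; at a coordinate `l` beyond `m_{u,αₙ}` with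
`|uₗ| < δ/2`, the point `u + δ eₗ` has a coordinate larger than `βₙ`, so it is not in `O`.
-/

open Filter Topology Bornology Metric

theorem isClopen_setOfPred_lt {X α : Type*} [TopologicalSpace X] [TopologicalSpace α]
    [LinearOrder α] [OrderClosedTopology α] {f g : X → α} (hf : Continuous f) (hg : Continuous g)
    (hfg : ∀ x, f x ≠ g x) : IsClopen {x | f x < g x} := by
  have h : {x | f x < g x} = {x | f x ≤ g x} := Set.ext fun x => (hfg x).le_iff_lt.symm
  exact ⟨h ▸ isClosed_le hf hg, isOpen_lt hf hg⟩

theorem isClopen_iInter_of_locallyFinite_compl {ι X : Type*} [TopologicalSpace X]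
    {U : ι → Set X} (hU : ∀ i, IsClopen (U i)) (hf : LocallyFinite fun i => (U i)ᶜ) :
    IsClopen (⋂ i, U i) := by
  refine ⟨isClosed_iInter fun i => (hU i).isClosed, ?_⟩
  rw [← isClosed_compl_iff, Set.compl_iInter]
  exact hf.isClosed_iUnion fun i => (hU i).compl.isClosed

theorem locallyFinite_setOfPred_le_norm {E : Type*} [SeminormedAddGroup E] {a : ℕ → ℝ}
    (ha : Tendsto a atTop atTop) : LocallyFinite fun n => {x : E | a n ≤ ‖x‖} := by
  intro x
  obtain ⟨N, hN⟩ := eventually_atTop.1 (ha.eventually_gt_atTop (‖x‖ + 1))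
  refine ⟨ball x 1, ball_mem_nhds x one_pos, (Set.finite_lt_nat N).subset ?_⟩
  rintro n ⟨y, hny, hy⟩
  show n < N
  by_contra! hNn
  linarith [hN n hNn, norm_lt_of_mem_ball hy, hny.out]

namespace ErdosSpace

lemma coords_add (x y : ErdosSpace) (k : ℕ) : coords (x + y) k = coords x k + coords y k := rfl

lemma lipschitzWith_coords (k : ℕ) : LipschitzWith 1 fun x : ErdosSpace => coords x k := by
  simpa [coords, Function.comp_def] using
    (lp.lipschitzWith_one_eval 2 k).comp (LipschitzWith.subtype_val (Erdos : Set ellTwo))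

lemma continuous_coords (k : ℕ) : Continuous fun x : ErdosSpace => coords x k :=
  (lipschitzWith_coords k).continuous

lemma hasSum_coords_sq (x : ErdosSpace) : HasSum (fun k => coords x k ^ 2) (‖x‖ ^ 2) := by
  simpa [Real.rpow_two, coords] using lp.hasSum_norm (p := 2) (by simp) (x : ellTwo)

lemma tendsto_abs_coords (x : ErdosSpace) : Tendsto (fun k => |coords x k|) atTop (𝓝 0) := by
  simpa only [Function.comp_def, Real.sqrt_sq_eq_abs, Real.sqrt_zero] using
    (Real.continuous_sqrt.tendsto 0).comp (hasSum_coords_sq x).summable.tendsto_atTop_zero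

def single (n : ℕ) : ℚ →+ ErdosSpace :=
  ((lp.singleAddMonoidHom 2 n).comp (Rat.castHom ℝ).toAddMonoidHom).codRestrict Erdos
    fun q k => ⟨if k = n then q else 0, by
      change lp.single (E := fun _ : ℕ => ℝ) 2 n (q : ℝ) k = _
      rw [lp.single_apply, Pi.single_apply]
      split_ifs <;> simp⟩

lemma coords_single (n : ℕ) (q : ℚ) (k : ℕ) :
    coords (single n q) k = if k = n then (q : ℝ) else 0 := by
  change lp.single (E := fun _ : ℕ => ℝ) 2 n (q : ℝ) k = _
  rw [lp.single_apply, Pi.single_apply]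

lemma norm_single (n : ℕ) (q : ℚ) : ‖single n q‖ = |(q : ℝ)| :=
  (lp.norm_single (E := fun _ : ℕ => ℝ) (p := 2) (by simp) n (q : ℝ)).trans (Real.norm_eq_abs _)

def partialNormSq (x : ErdosSpace) (m : ℕ) : ℝ := ∑ k ∈ Finset.range m, coords x k ^ 2

lemma partialNormSq_mono (x : ErdosSpace) : Monotone (partialNormSq x) := fun _ _ h =>
  Finset.sum_le_sum_of_subset_of_nonneg (Finset.range_subset_range.2 h) fun _ _ _ => sq_nonneg _

lemma partialNormSq_le_norm_sq (x : ErdosSpace) (m : ℕ) : partialNormSq x m ≤ ‖x‖ ^ 2 :=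
  sum_le_hasSum _ (fun _ _ => sq_nonneg _) (hasSum_coords_sq x)

lemma continuous_partialNormSq (m : ℕ) : Continuous fun x : ErdosSpace => partialNormSq x m :=
  continuous_finsetSum _ fun k _ => (continuous_coords k).pow 2

lemma partialNormSq_ne_of_irrational (x : ErdosSpace) (m : ℕ) {c : ℝ} (hc : Irrational c) :
    partialNormSq x m ≠ c := by
  choose q hq using x.2
  have : partialNormSq x m = ((∑ k ∈ Finset.range m, q k ^ 2 : ℚ) : ℝ) := by
    push_cast [partialNormSq, coords, hq]; rfl
  exact this ▸ hc.ne_rat _ |>.symm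

lemma partialNormSq_add_single (u : ErdosSpace) (l : ℕ) (q : ℚ) :
    partialNormSq (u + single l q) l = partialNormSq u l :=
  Finset.sum_congr rfl fun k hk => by
    rw [coords_add, coords_single, if_neg (Finset.mem_range.1 hk).ne, add_zero]

section A

variable {x : ErdosSpace} {α β : ℝ}

lemma mExists_iff (hα : 0 ≤ α) : mExists x α ↔ ∃ m, α ^ 2 < partialNormSq x m :=
  exists_congr fun _ => Real.lt_sqrt hα

lemma mIndex_le_iff (hα : 0 ≤ α) (h : mExists x α) {l : ℕ} :
    mIndex x α ≤ l ↔ α ^ 2 < partialNormSq x l :=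
  ⟨fun hl => ((Real.lt_sqrt hα).1 (Nat.sInf_mem h)).trans_le (partialNormSq_mono x hl),
    fun hl => Nat.sInf_le ((Real.lt_sqrt hα).2 hl)⟩

lemma mem_A_iff (hα : 0 ≤ α) :
    x ∈ A α β ↔ ∀ l, α ^ 2 < partialNormSq x l → |coords x l| < β := by
  by_cases h : mExists x α
  · change (mExists x α ∧ _) ∨ ¬mExists x α ↔ _
    simp only [h, mIndex_le_iff hα h, true_and, not_true_eq_false, or_false]
  · have hnone : ∀ l, ¬ α ^ 2 < partialNormSq x l := by simpa [mExists_iff hα] using h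
    simp [A, h, hnone]

lemma mem_A_of_norm_lt (hα : 0 ≤ α) (hx : ‖x‖ < α) : x ∈ A α β :=
  (mem_A_iff hα).2 fun l hl => absurd ((partialNormSq_le_norm_sq x l).trans_lt
    (pow_lt_pow_left₀ hx (norm_nonneg x) two_ne_zero)) hl.not_gt

lemma A_eq_iInter (hα : 0 ≤ α) :
    A α β = ⋂ l, {x | α ^ 2 < partialNormSq x l ∧ β ≤ |coords x l|}ᶜ := by
  ext x
  simp [mem_A_iff hα]

lemma locallyFinite_setOfPred_le_abs_coords (hβ : 0 < β) :
    LocallyFinite fun l => {x : ErdosSpace | β ≤ |coords x l|} := by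
  intro x
  obtain ⟨L, hL⟩ := eventually_atTop.1 ((tendsto_abs_coords x).eventually_lt_const (half_pos hβ))
  refine ⟨ball x (β / 2), ball_mem_nhds x (half_pos hβ), (Set.finite_lt_nat L).subset ?_⟩
  rintro l ⟨y, hly, hy⟩
  show l < L
  by_contra! hLl
  have hdist := ((lipschitzWith_coords l).dist_le_mul y x).trans_lt (by simpa using hy)
  rw [Real.dist_eq] at hdist
  have hxl : |coords x l| < β / 2 := hL l hLl
  have hyl : β ≤ |coords y l| := hly
  linarith [abs_sub_abs_le_abs_sub (coords y l) (coords x l)]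

lemma isClopen_A (hα : 0 ≤ α) (hα' : Irrational (α ^ 2)) (hβ : 0 < β) (hβ' : Irrational β) :
    IsClopen (A α β) := by
  rw [A_eq_iInter hα]
  refine isClopen_iInter_of_locallyFinite_compl (fun l => IsClopen.compl ?_) ?_
  · have hlt := isClopen_setOfPred_lt continuous_const (continuous_partialNormSq l)
      fun x => (partialNormSq_ne_of_irrational x l hα').symm
    have hle := (isClopen_setOfPred_lt (f := fun x => |coords x l|) (g := fun _ => β)
      (continuous_coords l).abs continuous_const fun x => ?_).compl
    · simpa only [Set.compl_ofPred, not_lt, Set.ofPred_and] using hlt.inter hle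
    obtain ⟨q, hq⟩ := x.2 l
    exact fun h => hβ' ⟨|q|, by rw [← h, Rat.cast_abs]; exact congrArg abs hq.symm⟩
  · simpa only [compl_compl] using
      (locallyFinite_setOfPred_le_abs_coords hβ).subset fun l x hx => hx.2

lemma add_single_notMem_A {u : ErdosSpace} {m l : ℕ} {q : ℚ} (hα : 0 ≤ α)
    (hm : α ^ 2 < partialNormSq u m) (hml : m ≤ l) (hq : β + |coords u l| ≤ |(q : ℝ)|) :
    u + single l q ∉ A α β := by
  rw [mem_A_iff hα]
  push Not
  refine ⟨l, ?_, ?_⟩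
  · rw [partialNormSq_add_single]
    exact hm.trans_le (partialNormSq_mono u hml)
  · rw [coords_add, coords_single, if_pos rfl]
    have h := abs_sub (coords u l + q) (coords u l)
    rw [add_sub_cancel_left] at h
    linarith

end A

lemma exists_add_single_mem_forall_lt {V : Set ErdosSpace} (hV : IsBounded V) {x : ErdosSpace}
    (hx : x ∈ V) (n : ℕ) {ε : ℝ} (hε : 0 < ε) :
    ∃ r : ℚ, x + single n r ∈ V ∧ ∀ s : ℚ, x + single n s ∈ V → (s : ℝ) < r + ε := by
  obtain ⟨R, hR⟩ := isBounded_iff_forall_norm_le.1 hV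
  set T : Set ℝ := (fun s : ℚ => (s : ℝ)) '' {s | x + single n s ∈ V}
  have hT : (0 : ℝ) ∈ T := ⟨0, by simpa using hx, Rat.cast_zero⟩
  have hTbdd : BddAbove T := by
    refine ⟨R + R, ?_⟩
    rintro _ ⟨s, hs, rfl⟩
    calc (s : ℝ) ≤ ‖single n s‖ := norm_single n s ▸ le_abs_self _
      _ = ‖(x + single n s) - x‖ := by rw [add_sub_cancel_left]
      _ ≤ ‖x + single n s‖ + ‖x‖ := norm_sub_le _ _
      _ ≤ R + R := add_le_add (hR _ hs) (hR x hx)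
  obtain ⟨_, ⟨r, hr, rfl⟩, hlt⟩ := exists_lt_of_lt_csSup ⟨0, hT⟩ (sub_lt_self (sSup T) hε)
  exact ⟨r, hr, fun s hs => by linarith [le_csSup hTbdd ⟨s, hs, rfl⟩]⟩

lemma exists_tendsto_sum_single {q : ℕ → ℚ} {R : ℝ}
    (hR : ∀ n, ‖∑ k ∈ Finset.range n, single k (q k)‖ ≤ R) :
    ∃ y : ErdosSpace, Tendsto (fun n => ∑ k ∈ Finset.range n, single k (q k)) atTop (𝓝 y) := by
  have hcoe : ∀ n, ((∑ k ∈ Finset.range n, single k (q k) : ErdosSpace) : ellTwo) =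
      ∑ k ∈ Finset.range n, lp.single 2 k (q k : ℝ) := fun n =>
    AddSubmonoidClass.coe_finsetSum _ _
  have hsum : ∀ n, ∑ k ∈ Finset.range n, ((q k : ℝ)) ^ 2 ≤ R ^ 2 := fun n => by
    have h := lp.norm_sum_single (E := fun _ : ℕ => ℝ) (p := 2) (by simp)
      (fun k => (q k : ℝ)) (Finset.range n)
    simp only [ENNReal.toReal_ofNat, Real.rpow_two, Real.norm_eq_abs, sq_abs] at h
    rw [← h, ← hcoe]
    exact pow_le_pow_left₀ (norm_nonneg _) (hR n) 2
  have hmem : Memℓp (fun k => (q k : ℝ)) 2 :=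
    memℓp_gen <| (summable_of_sum_range_le (fun k => sq_nonneg _) hsum).congr fun k => by
      rw [ENNReal.toReal_ofNat, Real.rpow_two, Real.norm_eq_abs, sq_abs]
  refine ⟨⟨⟨_, hmem⟩, fun k => ⟨q k, rfl⟩⟩, tendsto_subtype_rng.2 ?_⟩
  simpa only [hcoe] using (lp.hasSum_single (by simp) (⟨_, hmem⟩ : ellTwo)).tendsto_sum_nat

theorem not_isBounded_of_isClopen {V : Set ErdosSpace} (hV : IsClopen V) (h0 : 0 ∈ V) :
    ¬IsBounded V := by
  intro hb
  choose! r hrV hr using fun n (x : ErdosSpace) (hx : x ∈ V) =>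
    exists_add_single_mem_forall_lt hb hx n (Nat.one_div_pos_of_nat (n := n))
  let X : ℕ → ErdosSpace := fun n => Nat.rec 0 (fun k x => x + single k (r k x)) n
  have hXV : ∀ n, X n ∈ V := fun n => Nat.rec h0 (fun k hk => hrV k _ hk) n
  have hX : X = fun n => ∑ k ∈ Finset.range n, single k (r k (X k)) := by
    funext n
    induction n with
    | zero => rfl
    | succ n ih => rw [Finset.sum_range_succ, ← ih]
  obtain ⟨R, hR⟩ := isBounded_iff_forall_norm_le.1 hb
  obtain ⟨y, hy⟩ := exists_tendsto_sum_single fun n => hX ▸ hR _ (hXV n)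
  rw [← hX] at hy
  obtain ⟨ε, hε, hball⟩ := Metric.isOpen_iff.1 hV.isOpen y
    (hV.isClosed.mem_of_tendsto hy (Eventually.of_forall hXV))
  obtain ⟨N, hN⟩ := eventually_atTop.1
    (((tendsto_add_atTop_iff_nat 1).2 hy).eventually (ball_mem_nhds y (half_pos hε)) |>.and
      (tendsto_one_div_add_atTop_nhds_zero_nat.eventually (gt_mem_nhds (half_pos hε))))
  obtain ⟨hXN, hεN⟩ := hN N le_rfl
  obtain ⟨δ, hδN, hδε⟩ := exists_rat_btwn hεN
  have hz : X N + single N (r N (X N) + δ) ∈ V := by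
    refine hball ?_
    rw [map_add, ← add_assoc, mem_ball]
    calc dist (X (N + 1) + single N δ) y ≤ dist (X (N + 1)) y + ‖single N δ‖ :=
          (dist_triangle _ (X (N + 1)) _).trans_eq (by rw [dist_self_add_left, add_comm])
      _ < ε / 2 + ε / 2 := by
          rw [norm_single, abs_of_pos (Nat.one_div_pos_of_nat.trans hδN)]
          exact add_lt_add hXN hδε
      _ = ε := add_halves ε
  have := hr N (X N) (hXV N) _ hz
  push_cast at this
  linarith

def radius (n : ℕ) : ℝ := (n + 1) * √(√2)

def width (n : ℕ) : ℝ := √2 / (n + 1 : ℕ)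

lemma radius_pos (n : ℕ) : 0 < radius n := by
  unfold radius; positivity

lemma irrational_radius_sq (n : ℕ) : Irrational (radius n ^ 2) := by
  have h := irrational_sqrt_two.natCast_mul (m := (n + 1) ^ 2) (by positivity)
  rwa [radius, mul_pow, Real.sq_sqrt (Real.sqrt_nonneg 2), ← Nat.cast_succ, ← Nat.cast_pow]

lemma tendsto_radius : Tendsto radius atTop atTop :=
  (tendsto_atTop_add_const_right _ 1 tendsto_natCast_atTop_atTop).atTop_mul_const (by positivity)

lemma width_pos (n : ℕ) : 0 < width n := by
  unfold width; positivity

lemma irrational_width (n : ℕ) : Irrational (width n) :=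
  irrational_sqrt_two.div_natCast n.succ_ne_zero

lemma tendsto_width : Tendsto width atTop (𝓝 0) :=
  (tendsto_add_atTop_iff_nat 1).2 (tendsto_const_div_atTop_nhds_zero_nat √2)

def O : Set ErdosSpace := ⋂ n, A (radius n) (width n)

lemma isClopen_O : IsClopen O :=
  isClopen_iInter_of_locallyFinite_compl
    (fun n => isClopen_A (radius_pos n).le (irrational_radius_sq n) (width_pos n)
      (irrational_width n))
    ((locallyFinite_setOfPred_le_norm tendsto_radius).subset fun n _ hx =>
      not_lt.1 fun h => hx (mem_A_of_norm_lt (radius_pos n).le h))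

lemma zero_mem_O : (0 : ErdosSpace) ∈ O :=
  Set.mem_iInter.2 fun n => mem_A_of_norm_lt (radius_pos n).le (norm_zero.trans_lt (radius_pos n))

end ErdosSpace

open ErdosSpace in
/-- There is a clopen subset `O` of Erdős space containing `0` such that no clopen
set `V` containing `0` satisfies `V + V ⊆ O`. -/
theorem exists_clopen_no_clopen_sum_nbhd :
    ∃ O : Set ErdosSpace, IsClopen O ∧ (0 : ErdosSpace) ∈ O ∧
      ∀ V : Set ErdosSpace, IsClopen V → (0 : ErdosSpace) ∈ V →
        ∃ u ∈ V, ∃ v ∈ V, u + v ∉ O := by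
  refine ⟨O, isClopen_O, zero_mem_O, fun V hV h0 => ?_⟩
  obtain ⟨ε, hε, hball⟩ := Metric.isOpen_iff.1 hV.isOpen 0 h0
  obtain ⟨δ, hδ, hδε⟩ := exists_rat_btwn hε
  have hδ' : (0 : ℝ) < δ / 2 := by positivity
  obtain ⟨n, hn⟩ := (tendsto_width.eventually (gt_mem_nhds hδ')).exists
  obtain ⟨u, huV, hu⟩ : ∃ u ∈ V, radius n < ‖u‖ := by
    have h := not_isBounded_of_isClopen hV h0
    rw [isBounded_iff_forall_norm_le] at h
    push Not at h
    exact h _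
  obtain ⟨m, hm⟩ := ((hasSum_coords_sq u).tendsto_sum_nat.eventually
    (lt_mem_nhds (pow_lt_pow_left₀ hu (radius_pos n).le two_ne_zero))).exists
  obtain ⟨l, hml, hl⟩ := ((eventually_ge_atTop m).and
    ((tendsto_abs_coords u).eventually (gt_mem_nhds hδ'))).exists
  refine ⟨u, huV, single l δ, hball (by rwa [mem_ball_zero_iff, norm_single, abs_of_pos hδ]), ?_⟩
  refine fun hO => add_single_notMem_A (radius_pos n).le hm hml ?_ (Set.mem_iInter.1 hO n)
  rw [abs_of_pos hδ]
  linarith [show |coords u l| < δ / 2 from hl]
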